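/- Let H be a real inner product space, F : ℝⁿ → H differentiable, y, r ∈ H, and suppose ⟨DF(θ)[v], r⟩ = 0 for all θ, v. If θ̂ is a critical point of θ ↦ ‖y − F(θ) − r‖², then θ̂ is a critical point of θ ↦ ‖y − F(θ)‖². -/

import Mathlib

/-! Since `‖g - r‖² = ‖g‖² - 2⟪g, r⟫ + ‖r‖²` and the tangent directions of `g` are orthogonal
to `r`, the middle term is stationary, so both objectives have the same derivative at every
point. -/

open RealInnerProductSpace

section

variable {E H : Type*} [NormedAddCommGroup E] [NormedSpace ℝ E]
  [NormedAddCommGroup H] [InnerProductSpace ℝ H]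

theorem HasFDerivAt.inner_const_of_forall_inner_eq_zero {g : E → H} {g' : E →L[ℝ] H} {x : E}
    (hg : HasFDerivAt g g' x) (r : H) (horth : ∀ v, ⟪g' v, r⟫ = 0) :
    HasFDerivAt (fun θ => ⟪g θ, r⟫) (0 : E →L[ℝ] ℝ) x := by
  refine (hg.inner ℝ (hasFDerivAt_const r x)).congr_fderiv ?_
  ext v
  simp [horth]

theorem fderiv_norm_sub_const_sq_eq {g : E → H} {x : E} (r : H)
    (hg : DifferentiableAt ℝ g x) (horth : ∀ v, ⟪fderiv ℝ g x v, r⟫ = 0) :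
    fderiv ℝ (fun θ => ‖g θ - r‖ ^ 2) x = fderiv ℝ (fun θ => ‖g θ‖ ^ 2) x := by
  have hexpand : (fun θ => ‖g θ - r‖ ^ 2) = fun θ => ‖g θ‖ ^ 2 - 2 * ⟪g θ, r⟫ + ‖r‖ ^ 2 :=
    funext fun θ => norm_sub_sq_real _ _
  have hinner := hg.hasFDerivAt.inner_const_of_forall_inner_eq_zero r horth
  have hexpanded : HasFDerivAt (fun θ => ‖g θ‖ ^ 2 - 2 * ⟪g θ, r⟫ + ‖r‖ ^ 2)
      (fderiv ℝ (fun θ => ‖g θ‖ ^ 2) x) x := by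
    simpa using ((hg.norm_sq ℝ).hasFDerivAt.sub (hinner.const_mul 2)).add_const (‖r‖ ^ 2)
  rw [hexpand, hexpanded.fderiv]

end

theorem stmt_9 {n : ℕ} {H : Type*} [NormedAddCommGroup H] [InnerProductSpace ℝ H]
    (F : EuclideanSpace ℝ (Fin n) → H) (hF : Differentiable ℝ F) (y r : H)
    (hinc : ∀ θ v, ⟪fderiv ℝ F θ v, r⟫ = 0)
    (θhat : EuclideanSpace ℝ (Fin n))
    (hcrit : fderiv ℝ (fun θ => ‖y - F θ - r‖ ^ 2) θhat = 0) :
    fderiv ℝ (fun θ => ‖y - F θ‖ ^ 2) θhat = 0 := by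
  have hresidual : HasFDerivAt (fun θ => y - F θ) (-fderiv ℝ F θhat) θhat :=
    (hF θhat).hasFDerivAt.const_sub y
  rw [← hcrit, fderiv_norm_sub_const_sq_eq r hresidual.differentiableAt]
  intro v
  simp [hresidual.fderiv, inner_neg_left, hinc]
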